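/- Let F: [0,1] × ℝ² → ℝ be bounded, continuous and globally Lipschitz in (y,z) uniformly in x ∈ [0,1]. Then for every A, B ∈ ℝ there exists a solution u ∈ C¹([0,1]) of the boundary value problem Lu = F(x,u,u'), u(0) = A, u(1) = B. -/

import Mathlib

open Set MeasureTheory intervalIntegral

/-- A function `u ∈ C¹([0,1])` is a solution of the boundary value problem
`Lu = F(x,u,u')`, `u(0) = A`, `u(1) = B` for the second order operator `L` with
generalized drift (with data `σ` and `Σ = Sig`) if `u(0) = A`, `u(1) = B` and,
denoting by `d` the derivative of `u` on `[0,1]` (which is continuous), there is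
`x₁ ∈ ℝ` such that
`u'(x) = e^{−Σ(x)} (2 ∫_0^x e^{Σ(y)} F(y,u(y),u'(y))/σ²(y) dy + x₁)` on `[0,1]`. -/
def IsBVPSolutionF (σ Sig : ℝ → ℝ) (a b A B : ℝ) (F : ℝ → ℝ → ℝ → ℝ) (u : ℝ → ℝ) :
    Prop :=
  u a = A ∧ u b = B ∧
  ∃ (d : ℝ → ℝ) (x₁ : ℝ),
    ContinuousOn d (Set.Icc a b) ∧
    (∀ x ∈ Set.Icc a b, HasDerivWithinAt u (d x) (Set.Icc a b) x) ∧
    ∀ x ∈ Set.Icc a b,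
      d x = Real.exp (-(Sig x)) *
        (2 * (∫ y in a..x, Real.exp (Sig y) * F y (u y) (d y) / (σ y) ^ 2) + x₁)


/-! Writing `w = e^{Σ} u'`, the equation becomes the first order system
`u' = e^{-Σ} w`, `w' = 2 e^{Σ} F(x, u, e^{-Σ} w) / σ²`, whose right-hand side is continuous and
globally Lipschitz in `(u, w)` for `x ∈ [0,1]`. Some iterate of the Picard operator is then a
contraction on `C([0,1], ℝ²)`, so the system has a solution `(u_t, w_t)` on the whole of `[0,1]`
for every initial value `(A, t)`, and by Grönwall's inequality `u_t(1)` depends continuously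
on `t`. As `F` is bounded, `w_t` stays within a bounded distance of `t`, hence
`u_t(1) = A + t ∫₀¹ e^{-Σ} + O(1)`, and the intermediate value theorem yields a shooting
parameter `t` with `u_t(1) = B`. -/

open Function ODE NNReal
open scoped Nat

section GlobalPicardLindelof

variable {E : Type*} [NormedAddCommGroup E] [NormedSpace ℝ E] [CompleteSpace E]
  {f : ℝ → E → E} {a b : ℝ} {K : ℝ≥0}

omit [CompleteSpace E] in
lemma intervalIntegrable_comp_of_continuousOn (hf : ContinuousOn (uncurry f) (Icc a b ×ˢ univ))
    {α : ℝ → E} (hα : Continuous α) {t : ℝ} (ht : t ∈ Icc a b) :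
    IntervalIntegrable (fun τ ↦ f τ (α τ)) volume a t :=
  (continuousOn_comp hf hα.continuousOn (mapsTo_univ _ _)).mono
    (uIcc_subset_Icc (left_mem_Icc.2 (ht.1.trans ht.2)) ht) |>.intervalIntegrable

noncomputable def picardCM (hab : a ≤ b) (hf : ContinuousOn (uncurry f) (Icc a b ×ˢ univ))
    (x₀ : E) (α : C(Icc a b, E)) : C(Icc a b, E) where
  toFun := (Icc a b).domRestrict (picard f a x₀ (IccExtend hab α))
  continuous_toFun := ContinuousOn.domRestrict fun _ ht ↦
    (hasDerivWithinAt_picard_Icc (left_mem_Icc.2 hab) hf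
      α.continuous.Icc_extend'.continuousOn (fun _ _ ↦ mem_univ _) x₀ ht)
      |>.continuousWithinAt

lemma picardCM_apply (hab : a ≤ b) (hf : ContinuousOn (uncurry f) (Icc a b ×ˢ univ)) (x₀ : E)
    (α : C(Icc a b, E)) (t : Icc a b) :
    picardCM hab hf x₀ α t = picard f a x₀ (IccExtend hab α) t := rfl

lemma dist_iterate_picardCM_apply_le (hab : a ≤ b)
    (hf : ContinuousOn (uncurry f) (Icc a b ×ˢ univ)) (x₀ : E)
    (hK : ∀ t ∈ Icc a b, LipschitzWith K (f t))
    (α β : C(Icc a b, E)) (n : ℕ) (t : Icc a b) :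
    dist ((picardCM hab hf x₀)^[n] α t) ((picardCM hab hf x₀)^[n] β t) ≤
      (K * (t - a)) ^ n / n ! * dist α β := by
  induction n generalizing t with
  | zero => simpa using ContinuousMap.dist_apply_le_dist t
  | succ n ih =>
    set αₙ := (picardCM hab hf x₀)^[n] α
    set βₙ := (picardCM hab hf x₀)^[n] β
    have hint := fun γ : C(Icc a b, E) ↦
      intervalIntegrable_comp_of_continuousOn hf (γ.continuous.Icc_extend' (h := hab)) t.2
    rw [iterate_succ_apply', iterate_succ_apply', picardCM_apply, picardCM_apply, picard_apply,
      picard_apply, dist_add_left, dist_eq_norm, ← integral_sub (hint _) (hint _)]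
    calc _ ≤ ∫ τ in a..t, K ^ (n + 1) * (τ - a) ^ n / n ! * dist α β := by
          refine norm_integral_le_of_norm_le t.2.1 (ae_of_all _ fun τ hτ ↦ ?_)
            (Continuous.intervalIntegrable (by fun_prop) _ _)
          have hτ' : τ ∈ Icc a b := ⟨hτ.1.le, hτ.2.trans t.2.2⟩
          rw [← dist_eq_norm, IccExtend_of_mem _ _ hτ', IccExtend_of_mem _ _ hτ']
          calc _ ≤ K * dist (αₙ ⟨τ, hτ'⟩) (βₙ ⟨τ, hτ'⟩) := (hK τ hτ').dist_le_mul _ _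
            _ ≤ K * ((K * (τ - a)) ^ n / n ! * dist α β) := by gcongr; exact ih _
            _ = _ := by rw [mul_pow]; ring
      _ = (K * (t - a)) ^ (n + 1) / (n + 1)! * dist α β := by
          have : ∫ τ in a..t, (τ - a) ^ n = (t - a) ^ (n + 1) / (n + 1) := by
            rw [intervalIntegral.integral_comp_sub_right (· ^ n)]
            simp
          have hfun : (fun τ ↦ K ^ (n + 1) * (τ - a) ^ n / n ! * dist α β) =
              fun τ ↦ (K ^ (n + 1) / n ! * dist α β) * (τ - a) ^ n := by
            ext; ring
          rw [hfun, intervalIntegral.integral_const_mul, this, Nat.factorial_succ, mul_pow]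
          push_cast
          field_simp

lemma exists_contractingWith_iterate_picardCM (hab : a ≤ b)
    (hf : ContinuousOn (uncurry f) (Icc a b ×ˢ univ)) (x₀ : E)
    (hK : ∀ t ∈ Icc a b, LipschitzWith K (f t)) :
    ∃ (n : ℕ) (C : ℝ≥0), ContractingWith C (picardCM hab hf x₀)^[n] := by
  obtain ⟨n, hn⟩ := FloorSemiring.tendsto_pow_div_factorial_atTop (K * (b - a))
    |>.eventually (gt_mem_nhds zero_lt_one) |>.exists
  have hC : 0 ≤ (K * (b - a)) ^ n / n ! := by have := sub_nonneg.2 hab; positivity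
  refine ⟨n, ⟨_, hC⟩, hn, LipschitzWith.of_dist_le_mul fun α β ↦ ?_⟩
  refine (ContinuousMap.dist_le (by positivity)).2 fun t ↦ ?_
  refine (dist_iterate_picardCM_apply_le hab hf x₀ hK α β n t).trans ?_
  show _ ≤ (K * (b - a)) ^ n / n ! * dist α β
  have := sub_nonneg.2 t.2.1
  gcongr
  exact t.2.2

theorem exists_eq_forall_mem_Icc_hasDerivWithinAt_of_lipschitzWith (hab : a ≤ b)
    (hf : ContinuousOn (uncurry f) (Icc a b ×ˢ univ))
    (hK : ∀ t ∈ Icc a b, LipschitzWith K (f t)) (x₀ : E) :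
    ∃ γ : ℝ → E, γ a = x₀ ∧ ∀ t ∈ Icc a b, HasDerivWithinAt γ (f t (γ t)) (Icc a b) t := by
  obtain ⟨n, C, hC⟩ := exists_contractingWith_iterate_picardCM hab hf x₀ hK
  set α := ContractingWith.fixedPoint _ hC
  have hα : picardCM hab hf x₀ α = α := hC.isFixedPt_fixedPoint_iterate
  have hγ : EqOn (IccExtend hab α) (picard f a x₀ (IccExtend hab α)) (Icc a b) := fun t ht ↦
    (IccExtend_of_mem _ _ ht).trans (DFunLike.congr_fun hα ⟨t, ht⟩).symm
  refine ⟨IccExtend hab α, by rw [hγ (left_mem_Icc.2 hab), picard_apply₀], fun t ht ↦ ?_⟩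
  exact (hasDerivWithinAt_picard_Icc (left_mem_Icc.2 hab) hf
    α.continuous.Icc_extend'.continuousOn (fun _ _ ↦ mem_univ _) x₀ ht).congr_of_mem hγ ht

omit [CompleteSpace E] in
theorem dist_le_of_forall_mem_Icc_hasDerivWithinAt (hK : ∀ t ∈ Icc a b, LipschitzWith K (f t))
    {γ₁ γ₂ : ℝ → E} (hγ₁ : ∀ t ∈ Icc a b, HasDerivWithinAt γ₁ (f t (γ₁ t)) (Icc a b) t)
    (hγ₂ : ∀ t ∈ Icc a b, HasDerivWithinAt γ₂ (f t (γ₂ t)) (Icc a b) t)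
    {t : ℝ} (ht : t ∈ Icc a b) :
    dist (γ₁ t) (γ₂ t) ≤ dist (γ₁ a) (γ₂ a) * Real.exp (K * (t - a)) := by
  have hIci (γ : ℝ → E) (hγ : ∀ t ∈ Icc a b, HasDerivWithinAt γ (f t (γ t)) (Icc a b) t) :
      ∀ t ∈ Ico a b, HasDerivWithinAt γ (f t (γ t)) (Ici t) t := fun t ht ↦
    (hγ t (Ico_subset_Icc_self ht)).mono_of_mem_nhdsWithin (Icc_mem_nhdsGE_of_mem ht)
  exact dist_le_of_trajectories_ODE_of_mem (s := fun _ ↦ univ)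
    (fun t ht ↦ (hK t (Ico_subset_Icc_self ht)).lipschitzOnWith)
    (HasDerivWithinAt.continuousOn hγ₁) (hIci γ₁ hγ₁) (fun _ _ ↦ mem_univ _)
    (HasDerivWithinAt.continuousOn hγ₂) (hIci γ₂ hγ₂) (fun _ _ ↦ mem_univ _) le_rfl t ht

theorem integral_eq_sub_of_forall_mem_Icc_hasDerivWithinAt {g g' : ℝ → E}
    (hg : ∀ x ∈ Icc a b, HasDerivWithinAt g (g' x) (Icc a b) x) (hg' : ContinuousOn g' (Icc a b))
    {x : ℝ} (hx : x ∈ Icc a b) : ∫ y in a..x, g' y = g x - g a := by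
  have hsub : Icc a x ⊆ Icc a b := Icc_subset_Icc le_rfl hx.2
  refine integral_eq_sub_of_hasDeriv_right_of_le hx.1
    ((HasDerivWithinAt.continuousOn hg).mono hsub) (fun y hy ↦ ?_)
    ((hg'.mono hsub).intervalIntegrable_of_Icc hx.1)
  exact ((hg y (hsub (Ioo_subset_Icc_self hy))).hasDerivAt
    (Icc_mem_nhds hy.1 (hy.2.trans_le hx.2))).hasDerivWithinAt

end GlobalPicardLindelof

section Prod

variable {E F : Type*} [NormedAddCommGroup E] [NormedSpace ℝ E] [NormedAddCommGroup F]
  [NormedSpace ℝ F] {γ : ℝ → E × F} {γ' : E × F} {s : Set ℝ} {x : ℝ}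

protected lemma HasDerivWithinAt.fst (h : HasDerivWithinAt γ γ' s x) :
    HasDerivWithinAt (fun x ↦ (γ x).1) γ'.1 s x :=
  (hasFDerivAt_fst (p := γ x)).comp_hasDerivWithinAt x h

protected lemma HasDerivWithinAt.snd (h : HasDerivWithinAt γ γ' s x) :
    HasDerivWithinAt (fun x ↦ (γ x).2) γ'.2 s x :=
  (hasFDerivAt_snd (p := γ x)).comp_hasDerivWithinAt x h

end Prod

section BoundaryValueProblem

open Real

variable {σ Sig : ℝ → ℝ} {F : ℝ → ℝ → ℝ → ℝ} {a b : ℝ}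

noncomputable def bvpField (σ Sig : ℝ → ℝ) (F : ℝ → ℝ → ℝ → ℝ) (x : ℝ) (p : ℝ × ℝ) : ℝ × ℝ :=
  (exp (-Sig x) * p.2, 2 * (exp (Sig x) * F x p.1 (exp (-Sig x) * p.2) / σ x ^ 2))

lemma continuousOn_uncurry_bvpField (hσ : Continuous σ) (hSig : Continuous Sig)
    (hσ₀ : ∀ x, σ x ≠ 0) {s : Set ℝ}
    (hF : ContinuousOn (fun p : ℝ × ℝ × ℝ => F p.1 p.2.1 p.2.2) {p | p.1 ∈ s}) :
    ContinuousOn (uncurry (bvpField σ Sig F)) (s ×ˢ univ) := by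
  have hE : Continuous fun q : ℝ × ℝ × ℝ ↦ exp (-Sig q.1) * q.2.2 := by fun_prop
  have hFq : ContinuousOn (fun q : ℝ × ℝ × ℝ ↦ F q.1 q.2.1 (exp (-Sig q.1) * q.2.2))
      (s ×ˢ univ) :=
    hF.comp (continuous_fst.prodMk (continuous_snd.fst.prodMk hE)).continuousOn
      fun q hq ↦ hq.1
  refine hE.continuousOn.prodMk (continuousOn_const.mul (ContinuousOn.div ?_ ?_ ?_))
  · exact (continuous_exp.comp (hSig.comp continuous_fst)).continuousOn.mul hFq
  · exact ((hσ.comp continuous_fst).pow 2).continuousOn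
  · exact fun q _ ↦ pow_ne_zero 2 (hσ₀ q.1)

lemma lipschitzWith_bvpField {x e g k : ℝ} (he : |exp (-Sig x)| ≤ e)
    (hg : |exp (Sig x) / σ x ^ 2| ≤ g)
    (hk : ∀ y z y' z', |F x y z - F x y' z'| ≤ k * (|y - y'| + |z - z'|)) :
    LipschitzWith (e + 2 * g * k * (1 + e)).toNNReal (bvpField σ Sig F x) := by
  have hk₀ : 0 ≤ k := by simpa using (abs_nonneg _).trans (hk 1 0 0 0)
  have he₀ : 0 ≤ e := (abs_nonneg _).trans he
  have hg₀ : 0 ≤ g := (abs_nonneg _).trans hg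
  refine LipschitzWith.of_dist_le' fun p q ↦ ?_
  have h₁ : |p.1 - q.1| ≤ dist p q := by rw [Prod.dist_eq, ← Real.dist_eq]; exact le_max_left ..
  have h₂ : |p.2 - q.2| ≤ dist p q := by rw [Prod.dist_eq, ← Real.dist_eq]; exact le_max_right ..
  have hfst : |exp (-Sig x) * p.2 - exp (-Sig x) * q.2| ≤ e * dist p q := by
    rw [← mul_sub, abs_mul]
    exact mul_le_mul he h₂ (abs_nonneg _) he₀
  have hsnd : |2 * (exp (Sig x) * F x p.1 (exp (-Sig x) * p.2) / σ x ^ 2) -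
      2 * (exp (Sig x) * F x q.1 (exp (-Sig x) * q.2) / σ x ^ 2)| ≤
      2 * g * k * (1 + e) * dist p q := by
    have hF := hk p.1 (exp (-Sig x) * p.2) q.1 (exp (-Sig x) * q.2)
    calc _ = 2 * |exp (Sig x) / σ x ^ 2| * |F x p.1 (exp (-Sig x) * p.2) -
          F x q.1 (exp (-Sig x) * q.2)| := by
          rw [← abs_two, ← abs_mul, ← abs_mul]; ring_nf
      _ ≤ 2 * g * (k * (dist p q + e * dist p q)) := by gcongr; exact hF.trans (by gcongr)
      _ = _ := by ring
  have h₃ : 0 ≤ 2 * g * k * (1 + e) * dist p q := by positivity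
  have h₄ : 0 ≤ e * dist p q := by positivity
  rw [Prod.dist_eq, Real.dist_eq, Real.dist_eq]
  exact max_le (hfst.trans (by linarith)) (hsnd.trans (by linarith))

lemma abs_snd_bvpField_le {x g M : ℝ} (hg : |exp (Sig x) / σ x ^ 2| ≤ g)
    (hM : ∀ y z, |F x y z| ≤ M) (p : ℝ × ℝ) : |(bvpField σ Sig F x p).2| ≤ 2 * (g * M) := by
  rw [bvpField, abs_mul, abs_two, mul_div_right_comm, abs_mul]
  exact mul_le_mul_of_nonneg_left (mul_le_mul hg (hM _ _) (abs_nonneg _)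
    ((abs_nonneg _).trans hg)) zero_le_two

lemma isBVPSolutionF_of_hasDerivWithinAt_bvpField
    (hv : ContinuousOn (uncurry (bvpField σ Sig F)) (Icc a b ×ˢ univ)) {γ : ℝ → ℝ × ℝ}
    (hγ : ∀ x ∈ Icc a b, HasDerivWithinAt γ (bvpField σ Sig F x (γ x)) (Icc a b) x)
    {A B x₁ : ℝ} (ha : γ a = (A, x₁)) (hb : (γ b).1 = B) :
    IsBVPSolutionF σ Sig a b A B F (fun x ↦ (γ x).1) := by
  have hv' : ContinuousOn (fun x ↦ bvpField σ Sig F x (γ x)) (Icc a b) :=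
    continuousOn_comp hv (HasDerivWithinAt.continuousOn hγ) (mapsTo_univ _ _)
  refine ⟨by simp [ha], hb, fun x ↦ exp (-Sig x) * (γ x).2, x₁, hv'.fst,
    fun x hx ↦ (hγ x hx).fst, fun x hx ↦ ?_⟩
  have hw := integral_eq_sub_of_forall_mem_Icc_hasDerivWithinAt
    (fun y hy ↦ (hγ y hy).snd) hv'.snd hx
  simp only [bvpField, intervalIntegral.integral_const_mul, ha] at hw ⊢
  rw [hw]
  ring

lemma abs_fst_sub_sub_mul_integral_le (hab : a ≤ b) (hSig : Continuous Sig)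
    (hv : ContinuousOn (uncurry (bvpField σ Sig F)) (Icc a b ×ˢ univ)) {R : ℝ}
    (hR : ∀ x ∈ Icc a b, ∀ p, |(bvpField σ Sig F x p).2| ≤ R) {γ : ℝ → ℝ × ℝ}
    (hγ : ∀ x ∈ Icc a b, HasDerivWithinAt γ (bvpField σ Sig F x (γ x)) (Icc a b) x) :
    |(γ b).1 - (γ a).1 - (γ a).2 * ∫ x in a..b, exp (-Sig x)| ≤
      R * (b - a) * ∫ x in a..b, exp (-Sig x) := by
  have hv' : ContinuousOn (fun x ↦ bvpField σ Sig F x (γ x)) (Icc a b) :=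
    continuousOn_comp hv (HasDerivWithinAt.continuousOn hγ) (mapsTo_univ _ _)
  have hR₀ : 0 ≤ R := (abs_nonneg _).trans (hR a (left_mem_Icc.2 hab) 0)
  have hw (x : ℝ) (hx : x ∈ Icc a b) : |(γ x).2 - (γ a).2| ≤ R * (b - a) :=
    (norm_image_sub_le_of_norm_deriv_le_segment'
      (fun y hy ↦ (hγ y hy).snd) (fun y hy ↦ hR y (Ico_subset_Icc_self hy) _) x hx).trans
      (by gcongr; exact hx.2)
  have hu : (γ b).1 - (γ a).1 = ∫ x in a..b, exp (-Sig x) * (γ x).2 :=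
    (integral_eq_sub_of_forall_mem_Icc_hasDerivWithinAt (fun y hy ↦ (hγ y hy).fst) hv'.fst
      (right_mem_Icc.2 hab)).symm
  have hE : Continuous fun x ↦ exp (-Sig x) := by fun_prop
  calc _ = |∫ x in a..b, exp (-Sig x) * ((γ x).2 - (γ a).2)| := by
        rw [hu, ← intervalIntegral.integral_const_mul, ← intervalIntegral.integral_sub
          (hv'.fst.intervalIntegrable_of_Icc hab :
            IntervalIntegrable (fun x ↦ exp (-Sig x) * (γ x).2) volume a b)
          (hE.intervalIntegrable _ _ |>.const_mul _)]
        congr 1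
        exact intervalIntegral.integral_congr fun x _ ↦ by ring
    _ ≤ ∫ x in a..b, exp (-Sig x) * (R * (b - a)) := by
        rw [← Real.norm_eq_abs]
        refine norm_integral_le_of_norm_le hab (ae_of_all _ fun x hx ↦ ?_)
          (hE.intervalIntegrable _ _ |>.mul_const _)
        rw [Real.norm_eq_abs, abs_mul, abs_of_pos (exp_pos _)]
        exact mul_le_mul_of_nonneg_left (hw x (Ioc_subset_Icc_self hx)) (exp_pos _).le
    _ = _ := by rw [intervalIntegral.integral_mul_const, mul_comm]

end BoundaryValueProblem

open Filter in
lemma Continuous.surjective_of_abs_sub_mul_le {f : ℝ → ℝ} (hf : Continuous f) {c D : ℝ}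
    (hc : 0 < c) (h : ∀ t, |f t - c * t| ≤ D) : Surjective f := by
  refine hf.surjective (tendsto_atTop_mono (f := fun t ↦ c * t + -D) (fun t ↦ ?_) ?_)
    (tendsto_atBot_mono (f := fun t ↦ c * t + D) (fun t ↦ ?_) ?_)
  · linarith [(abs_le.1 (h t)).1]
  · exact tendsto_atTop_add_const_right _ _ (tendsto_id.const_mul_atTop hc)
  · linarith [(abs_le.1 (h t)).2]
  · exact tendsto_atBot_add_const_right _ _ (tendsto_id.const_mul_atBot hc)

/-- if `F : [0,1] × ℝ² → ℝ` is bounded, continuous and globally Lipschitz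
in `(y,z)` uniformly in `x ∈ [0,1]`, then for every `A, B ∈ ℝ` there exists a solution
of the boundary value problem `Lu = F(x,u,u')`, `u(0) = A`, `u(1) = B`. -/
theorem bvp_exists_solution_bounded_lipschitz
    (σ Sig : ℝ → ℝ) (hσ : Continuous σ) (hSig : Continuous Sig)
    (hσpos : ∀ x, 0 < σ x)
    (F : ℝ → ℝ → ℝ → ℝ)
    (hF : ContinuousOn (fun p : ℝ × ℝ × ℝ => F p.1 p.2.1 p.2.2)
      {p : ℝ × ℝ × ℝ | p.1 ∈ Icc (0 : ℝ) 1})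
    (hbdd : ∃ C : ℝ, ∀ x ∈ Icc (0 : ℝ) 1, ∀ y z : ℝ, |F x y z| ≤ C)
    (hLip : ∃ k : ℝ, ∀ x ∈ Icc (0 : ℝ) 1, ∀ y z ytilde ztilde : ℝ,
      |F x y z - F x ytilde ztilde| ≤ k * (|y - ytilde| + |z - ztilde|))
    (A B : ℝ) :
    ∃ u : ℝ → ℝ, IsBVPSolutionF σ Sig 0 1 A B F u := by
  obtain ⟨M, hM⟩ := hbdd
  obtain ⟨k, hk⟩ := hLip
  have hσ₀ (x : ℝ) : σ x ^ 2 ≠ 0 := pow_ne_zero 2 (hσpos x).ne'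
  obtain ⟨e, he⟩ := (isCompact_Icc (a := (0 : ℝ)) (b := 1)).exists_bound_of_continuousOn
    (f := fun x ↦ Real.exp (-Sig x)) (by fun_prop)
  obtain ⟨g, hg⟩ := (isCompact_Icc (a := (0 : ℝ)) (b := 1)).exists_bound_of_continuousOn
    (f := fun x ↦ Real.exp (Sig x) / σ x ^ 2)
    ((Real.continuous_exp.comp hSig).div (hσ.pow 2) hσ₀).continuousOn
  have hv := continuousOn_uncurry_bvpField hσ hSig (fun x ↦ (hσpos x).ne') hF
  obtain ⟨K, hK⟩ : ∃ K : ℝ≥0, ∀ x ∈ Icc (0 : ℝ) 1, LipschitzWith K (bvpField σ Sig F x) :=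
    ⟨_, fun x hx ↦ lipschitzWith_bvpField (he x hx) (hg x hx) (hk x hx)⟩
  choose γ hγ₀ hγ using fun t : ℝ ↦
    exists_eq_forall_mem_Icc_hasDerivWithinAt_of_lipschitzWith zero_le_one hv hK (A, t)
  have hS : Continuous fun t ↦ (γ t 1).1 - A := by
    refine (LipschitzWith.of_dist_le' (K := Real.exp K) fun s t ↦ ?_).continuous.fst.sub
      continuous_const
    simpa [hγ₀, Prod.dist_eq, mul_comm] using
      dist_le_of_forall_mem_Icc_hasDerivWithinAt hK (hγ s) (hγ t) (right_mem_Icc.2 zero_le_one)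
  have hE : 0 < ∫ x in (0 : ℝ)..1, Real.exp (-Sig x) :=
    intervalIntegral_pos_of_pos_on (Continuous.intervalIntegrable (by fun_prop) _ _)
      (fun _ _ ↦ Real.exp_pos _) zero_lt_one
  obtain ⟨t, ht⟩ := hS.surjective_of_abs_sub_mul_le hE (fun t ↦ by
    simpa [hγ₀, mul_comm] using abs_fst_sub_sub_mul_integral_le zero_le_one hSig hv
      (fun x hx ↦ abs_snd_bvpField_le (hg x hx) (hM x hx)) (hγ t)) (B - A)
  exact ⟨_, isBVPSolutionF_of_hasDerivWithinAt_bvpField hv (hγ t) (hγ₀ t) (by linarith)⟩
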